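/- arXiv:1906.07715 — 3 statements merged into one kernel-verified Lean document; each statement's English description precedes it below -/
import Mathlib

section
/- Let (P_n) and (Q_n) be simple sets of polynomials with dual bases (a_n) and (b_n) respectively, and suppose π is a fixed polynomial of degree N and the structure relation π(x) P_n^{[m]}(x) = ∑_{j=n-M}^{n+N} c_{n,j} Q_j^{[k]}(x) holds for all n (with Q_j ≡ 0 for j < 0 and c_{n,n+N} = 1). Let (a_n^{[m]}) and (b_n^{[k]}) be the dual bases of (P_n^{[m]}) and (Q_n^{[k]}). Then for every n ≥ 0, π b_n^{[k]} = ∑_{j=n-N}^{n+M} c_{j,n} a_j^{[m]}, where terms with negative index are zero and c_{j,n} := 0 whenever n < j - M or n > j + N. -/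
open Polynomial Finset

/-- Left product of a polynomial by a moment functional: ⟨Φw, p⟩ = ⟨w, Φp⟩. -/
noncomputable def lmul (Φ : ℂ[X]) (w : ℂ[X] →ₗ[ℂ] ℂ) : ℂ[X] →ₗ[ℂ] ℂ :=
  w ∘ₗ LinearMap.mulLeft ℂ Φ

/-- The monic-normalized m-th derivative `P_n^{[m]} = (1/(n+1)_m) P_{n+m}^{(m)}`. -/
noncomputable def normDeriv (P : ℕ → ℂ[X]) (m n : ℕ) : ℂ[X] :=
  (∏ i ∈ Finset.range m, ((n : ℂ) + 1 + i))⁻¹ • derivative^[m] (P (n + m))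

/-!
Both sides are linear functionals, so it suffices to compare them on the basis `P_i^{[m]}` of
`ℂ[X]`. There, duality gives `⟨π b_n^{[k]}, P_i^{[m]}⟩ = ⟨b_n^{[k]}, π P_i^{[m]}⟩ = c_{i,n}`
by the structure relation, and `⟨∑_j c_{j,n} a_j^{[m]}, P_i^{[m]}⟩ = c_{i,n}`; the truncations
of the two sums only drop coefficients that vanish by the band condition on `c`.
-/

namespace Polynomial

theorem span_range_eq_top_of_natDegree_eq {K : Type*} [Field K] {f : ℕ → K[X]}
    (hf0 : ∀ n, f n ≠ 0) (hfdeg : ∀ n, (f n).natDegree = n) :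
    Submodule.span K (Set.range f) = ⊤ :=
  let S : Sequence K := ⟨f, fun n => by rw [degree_eq_natDegree (hf0 n), hfdeg n]⟩
  S.span fun n => (leadingCoeff_ne_zero.mpr (hf0 n)).isUnit

variable {R : Type*} [Semiring R] [Module.IsTorsionFree ℕ R] {p : R[X]} {k : ℕ}

theorem coeff_iterate_derivative_natDegree_sub_ne_zero (hp : p ≠ 0) (hk : k ≤ p.natDegree) :
    (derivative^[k] p).coeff (p.natDegree - k) ≠ 0 := by
  rw [coeff_iterate_derivative, Nat.sub_add_cancel hk]
  exact smul_ne_zero (Nat.descFactorial_eq_zero_iff_lt.not.mpr (by omega))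
    (leadingCoeff_ne_zero.mpr hp)

theorem iterate_derivative_ne_zero (hp : p ≠ 0) (hk : k ≤ p.natDegree) :
    derivative^[k] p ≠ 0 := fun h =>
  coeff_iterate_derivative_natDegree_sub_ne_zero hp hk (by rw [h, coeff_zero])

theorem natDegree_iterate_derivative_eq (hp : p ≠ 0) (hk : k ≤ p.natDegree) :
    (derivative^[k] p).natDegree = p.natDegree - k :=
  natDegree_eq_of_le_of_coeff_ne_zero (natDegree_iterate_derivative p k)
    (coeff_iterate_derivative_natDegree_sub_ne_zero hp hk)

end Polynomial

theorem lmul_apply (Φ : ℂ[X]) (w : ℂ[X] →ₗ[ℂ] ℂ) (p : ℂ[X]) : lmul Φ w p = w (Φ * p) := rfl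

section normDeriv

variable {P : ℕ → ℂ[X]}

theorem normDeriv_scale_ne_zero (m n : ℕ) : (∏ i ∈ Finset.range m, ((n : ℂ) + 1 + i))⁻¹ ≠ 0 :=
  inv_ne_zero <| prod_ne_zero_iff.mpr fun i _ h => by norm_cast at h; omega

theorem normDeriv_ne_zero (hP0 : ∀ n, P n ≠ 0) (hPdeg : ∀ n, (P n).natDegree = n) (m n : ℕ) :
    normDeriv P m n ≠ 0 :=
  smul_ne_zero (normDeriv_scale_ne_zero m n)
    (iterate_derivative_ne_zero (hP0 _) (by rw [hPdeg]; omega))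

theorem natDegree_normDeriv (hP0 : ∀ n, P n ≠ 0) (hPdeg : ∀ n, (P n).natDegree = n) (m n : ℕ) :
    (normDeriv P m n).natDegree = n := by
  rw [normDeriv, natDegree_smul _ (normDeriv_scale_ne_zero m n),
    natDegree_iterate_derivative_eq (hP0 _) (by rw [hPdeg]; omega), hPdeg, Nat.add_sub_cancel]

theorem span_range_normDeriv (hP0 : ∀ n, P n ≠ 0) (hPdeg : ∀ n, (P n).natDegree = n) (m : ℕ) :
    Submodule.span ℂ (Set.range (normDeriv P m)) = ⊤ :=
  span_range_eq_top_of_natDegree_eq (normDeriv_ne_zero hP0 hPdeg m)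
    (natDegree_normDeriv hP0 hPdeg m)

end normDeriv

section DualFamily

variable {R V : Type*} [CommSemiring R] [AddCommMonoid V] [Module R V]
  {e : ℕ → V →ₗ[R] R} {f : ℕ → V}

theorem apply_sum_range_smul_of_dual (he : ∀ i j, e i (f j) = if i = j then 1 else 0)
    (c : ℕ → R) (r i : ℕ) : e i (∑ j ∈ range r, c j • f j) = if i < r then c i else 0 := by
  simp [he]

theorem sum_range_smul_apply_of_dual (he : ∀ i j, e i (f j) = if i = j then 1 else 0)
    (c : ℕ → R) (r i : ℕ) : (∑ j ∈ range r, c j • e j) (f i) = if i < r then c i else 0 := by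
  simp [he]

end DualFamily

theorem stmt4_general (P Q : ℕ → ℂ[X]) (m k M N : ℕ) (π : ℂ[X]) (c : ℕ → ℕ → ℂ)
    (hPmonic : ∀ n, (P n).Monic) (hPdeg : ∀ n, (P n).natDegree = n)
    -- the dual bases of the normalized derivatives (P_n^{[m]}) and (Q_n^{[k]})
    (aM bK : ℕ → (ℂ[X] →ₗ[ℂ] ℂ))
    (haM : ∀ i j, aM i (normDeriv P m j) = if i = j then 1 else 0)
    (hbK : ∀ i j, bK i (normDeriv Q k j) = if i = j then 1 else 0)
    -- conventions on the coefficients : c_{n,j} = 0 outside n-M ≤ j ≤ n+N, c_{n,n+N} = 1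
    (hc0 : ∀ n j, (j + M < n ∨ n + N < j) → c n j = 0)
    -- the structure relation
    (hstruct : ∀ n, π * normDeriv P m n =
      ∑ j ∈ Finset.range (n + N + 1), c n j • normDeriv Q k j) :
    ∀ n, lmul π (bK n) = ∑ j ∈ Finset.range (n + M + 1), c j n • aM j := by
  intro n
  refine LinearMap.ext_on (span_range_normDeriv (fun j => (hPmonic j).ne_zero) hPdeg m) ?_
  rintro _ ⟨i, rfl⟩
  rw [lmul_apply, hstruct i, apply_sum_range_smul_of_dual hbK,
    sum_range_smul_apply_of_dual haM]
  have hband := hc0 i n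
  split_ifs <;> grind

/-- From the structure relation `π P_n^{[m]} = ∑_{j=n-M}^{n+N} c_{n,j} Q_j^{[k]}` one deduces
the dual relation `π b_n^{[k]} = ∑_{j=n-N}^{n+M} c_{j,n} a_j^{[m]}`. -/
theorem stmt4 (P Q : ℕ → ℂ[X]) (m k M N : ℕ) (π : ℂ[X]) (c : ℕ → ℕ → ℂ)
    (hPmonic : ∀ n, (P n).Monic) (hPdeg : ∀ n, (P n).natDegree = n)
    (hQmonic : ∀ n, (Q n).Monic) (hQdeg : ∀ n, (Q n).natDegree = n)
    (hπ : π.natDegree = N)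
    -- the dual bases of (P_n) and (Q_n)
    (a b : ℕ → (ℂ[X] →ₗ[ℂ] ℂ))
    (ha : ∀ i j, a i (P j) = if i = j then 1 else 0)
    (hb : ∀ i j, b i (Q j) = if i = j then 1 else 0)
    -- the dual bases of the normalized derivatives (P_n^{[m]}) and (Q_n^{[k]})
    (aM bK : ℕ → (ℂ[X] →ₗ[ℂ] ℂ))
    (haM : ∀ i j, aM i (normDeriv P m j) = if i = j then 1 else 0)
    (hbK : ∀ i j, bK i (normDeriv Q k j) = if i = j then 1 else 0)
    -- conventions on the coefficients : c_{n,j} = 0 outside n-M ≤ j ≤ n+N, c_{n,n+N} = 1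
    (hc0 : ∀ n j, (j + M < n ∨ n + N < j) → c n j = 0)
    (hc1 : ∀ n, c n (n + N) = 1)
    -- the structure relation
    (hstruct : ∀ n, π * normDeriv P m n =
      ∑ j ∈ Finset.range (n + N + 1), c n j • normDeriv Q k j) :
    ∀ n, lmul π (bK n) = ∑ j ∈ Finset.range (n + M + 1), c j n • aM j :=
  stmt4_general P Q m k M N π c hPmonic hPdeg aM bK haM hbK hc0 hstruct
end

section
/- Suppose u and v are linear functionals on polynomials, A, A_1, A_2 are polynomials with A not identically zero, and Av = A_1 u and A(Dv) = A_2 u hold as functional identities. Then D(A A_1 u) = (2A' A_1 + A A_2) u and D(A A_1 v) = ((A A_1)' + A A_2) v. In particular, if A_1 ≠ 0 then both u and v satisfy a Pearson-type (semiclassical) functional equation D(Φ w) = Ψ w with nonzero Φ. -/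
/-! Multiplying `Av = A₁u` by `A` gives `AA₁u = A²v`, so the Leibniz rule for `D(A²v)` and
`A·Dv = A₂u` give the Pearson equation for `u`. For `v`, the Leibniz rule leaves the term
`AA₁·Dv = A₁A₂u = A₂Av`. -/

open Polynomial

/-- Distributional derivative of a moment functional: ⟨Dw, p⟩ = -⟨w, p'⟩. -/
noncomputable def fD (w : ℂ[X] →ₗ[ℂ] ℂ) : ℂ[X] →ₗ[ℂ] ℂ :=
  -(w ∘ₗ (derivative : ℂ[X] →ₗ[ℂ] ℂ[X]))

section

variable {u v : ℂ[X] →ₗ[ℂ] ℂ} {A B : ℂ[X]}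

lemma lmul_lmul (Φ Ψ : ℂ[X]) (w : ℂ[X] →ₗ[ℂ] ℂ) : lmul Φ (lmul Ψ w) = lmul (Φ * Ψ) w := by
  ext p
  simp only [lmul, LinearMap.comp_apply, LinearMap.mulLeft_apply]
  congr 1
  ring

lemma lmul_add (Φ Ψ : ℂ[X]) (w : ℂ[X] →ₗ[ℂ] ℂ) : lmul (Φ + Ψ) w = lmul Φ w + lmul Ψ w := by
  ext p
  simp only [lmul, LinearMap.comp_apply, LinearMap.mulLeft_apply, add_mul, map_add,
    LinearMap.add_apply]

lemma fD_lmul (Φ : ℂ[X]) (w : ℂ[X] →ₗ[ℂ] ℂ) :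
    fD (lmul Φ w) = lmul (derivative Φ) w + lmul Φ (fD w) := by
  ext p
  simp only [lmul, fD, LinearMap.comp_apply, LinearMap.neg_apply, LinearMap.add_apply,
    LinearMap.mulLeft_apply, derivative_mul, map_add]
  ring

lemma lmul_mul_eq_of_lmul_eq (h : lmul A v = lmul B u) (C : ℂ[X]) :
    lmul (C * A) v = lmul (C * B) u := by
  rw [← lmul_lmul, h, lmul_lmul]

variable {A₁ A₂ : ℂ[X]}

lemma fD_lmul_rhs_of_lmul_eq (h1 : lmul A v = lmul A₁ u) (h2 : lmul A (fD v) = lmul A₂ u) :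
    fD (lmul (A * A₁) u) = lmul (2 * derivative A * A₁ + A * A₂) u :=
  calc fD (lmul (A * A₁) u)
      = fD (lmul (A * A) v) := by rw [lmul_mul_eq_of_lmul_eq h1]
    _ = lmul (2 * derivative A * A) v + lmul (A * A) (fD v) := by
        rw [fD_lmul, derivative_mul, two_mul, add_mul, mul_comm A (derivative A)]
    _ = lmul (2 * derivative A * A₁) u + lmul (A * A₂) u := by
        rw [lmul_mul_eq_of_lmul_eq h1, lmul_mul_eq_of_lmul_eq h2]
    _ = lmul (2 * derivative A * A₁ + A * A₂) u := (lmul_add _ _ _).symm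

lemma fD_lmul_lhs_of_lmul_eq (h1 : lmul A v = lmul A₁ u) (h2 : lmul A (fD v) = lmul A₂ u) :
    fD (lmul (A * A₁) v) = lmul (derivative (A * A₁) + A * A₂) v := by
  have hDv : lmul (A * A₁) (fD v) = lmul (A * A₂) v := by
    rw [mul_comm A, lmul_mul_eq_of_lmul_eq h2, mul_comm A, lmul_mul_eq_of_lmul_eq h1, mul_comm]
  rw [fD_lmul, hDv, lmul_add]

end

/-- If `Av = A₁u` and `A(Dv) = A₂u` with `A ≠ 0`, then
`D(AA₁u) = (2A'A₁ + AA₂)u` and `D(AA₁v) = ((AA₁)' + AA₂)v`; in particular, when `A₁ ≠ 0`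
both `u` and `v` satisfy a Pearson-type equation `D(Φw) = Ψw` with nonzero `Φ`. -/
theorem stmt7 (u v : ℂ[X] →ₗ[ℂ] ℂ) (A A₁ A₂ : ℂ[X]) (hA : A ≠ 0)
    (h1 : lmul A v = lmul A₁ u) (h2 : lmul A (fD v) = lmul A₂ u) :
    fD (lmul (A * A₁) u) = lmul (2 * derivative A * A₁ + A * A₂) u ∧
    fD (lmul (A * A₁) v) = lmul (derivative (A * A₁) + A * A₂) v ∧
    (A₁ ≠ 0 →
      (∃ Φ Ψ : ℂ[X], Φ ≠ 0 ∧ fD (lmul Φ u) = lmul Ψ u) ∧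
      (∃ Φ Ψ : ℂ[X], Φ ≠ 0 ∧ fD (lmul Φ v) = lmul Ψ v)) := by
  have hu := fD_lmul_rhs_of_lmul_eq h1 h2
  have hv := fD_lmul_lhs_of_lmul_eq h1 h2
  exact ⟨hu, hv, fun hA₁ => ⟨⟨_, _, mul_ne_zero hA hA₁, hu⟩, ⟨_, _, mul_ne_zero hA hA₁, hv⟩⟩⟩
end

section
/- With notation as in the previous structure relation, if s_1 > 0 then 2s_1 + r_0 r_1 = γ_1 + s_1 + r_0² > 0; in particular 2s_1 + r_0 r_1 ≠ 0, and the recurrence coefficients can be recovered as β_0 = r_0, β_1 = 2r_1 − r_0, γ_1 = s_1 − r_0(r_0 − r_1), and γ_2 = (s_1(3s_2 − 2s_1) + 2r_1(s_1(2r_0 − r_1) − r_0 r_1(r_0 − r_1))) / (2s_1 + r_0 r_1). -/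
/- The identity `2s₁ + r₀r₁ = γ₁ + s₁ + r₀²` is immediate from the formulas for `r₀, r₁, s₁`,
and with `γ₁, s₁ > 0` it gives positivity. Multiplying the structure relation by `-3r₁` and
inserting the formulas for `r₂` and `s₂` turns it into `γ₂ (2s₁ + r₀r₁) = …`, so that
positivity is exactly what allows solving for `γ₂`. -/

theorem gamma₂_mul_eq_of_structure_relation (β₀ β₁ β₂ γ₁ γ₂ r₀ r₁ r₂ s₁ s₂ : ℝ)
    (h1 : r₀ = β₀)
    (h2 : r₁ = (β₀ + β₁) / 2)
    (h3 : s₁ = γ₁ + β₀ * (β₀ - β₁) / 2)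
    (h4 : r₂ = (β₀ + β₁ + β₂) / 3)
    (h5 : s₂ = (β₀ ^ 2 + β₁ ^ 2 - (β₀ + β₁) * β₂ + 2 * (γ₁ + γ₂)) / 3)
    (h6 : β₀ * (s₂ - γ₂) = (β₀ * β₁ - γ₁) * (r₂ - β₂)) :
    γ₂ * (2 * s₁ + r₀ * r₁) = s₁ * (3 * s₂ - 2 * s₁) +
      2 * r₁ * (s₁ * (2 * r₀ - r₁) - r₀ * r₁ * (r₀ - r₁)) := by
  subst r₀ r₁ r₂ s₁ s₂
  linear_combination (-3 * ((β₀ + β₁) / 2)) * h6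

theorem stmt11_general (β₀ β₁ β₂ γ₁ γ₂ r₀ r₁ r₂ s₁ s₂ : ℝ)
    (hγ₁ : 0 < γ₁) (hs₁ : 0 < s₁)
    (h1 : r₀ = β₀)
    (h2 : r₁ = (β₀ + β₁) / 2)
    (h3 : s₁ = γ₁ + β₀ * (β₀ - β₁) / 2)
    (h4 : r₂ = (β₀ + β₁ + β₂) / 3)
    (h5 : s₂ = (β₀ ^ 2 + β₁ ^ 2 - (β₀ + β₁) * β₂ + 2 * (γ₁ + γ₂)) / 3)
    (h6 : β₀ * (s₂ - γ₂) = (β₀ * β₁ - γ₁) * (r₂ - β₂)) :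
    2 * s₁ + r₀ * r₁ = γ₁ + s₁ + r₀ ^ 2 ∧
    0 < 2 * s₁ + r₀ * r₁ ∧
    2 * s₁ + r₀ * r₁ ≠ 0 ∧
    β₀ = r₀ ∧
    β₁ = 2 * r₁ - r₀ ∧
    γ₁ = s₁ - r₀ * (r₀ - r₁) ∧
    γ₂ = (s₁ * (3 * s₂ - 2 * s₁) +
        2 * r₁ * (s₁ * (2 * r₀ - r₁) - r₀ * r₁ * (r₀ - r₁))) / (2 * s₁ + r₀ * r₁) := by
  have hD : 2 * s₁ + r₀ * r₁ = γ₁ + s₁ + r₀ ^ 2 := by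
    subst h1 h2 h3; ring
  have hpos : 0 < 2 * s₁ + r₀ * r₁ := hD ▸ by positivity
  refine ⟨hD, hpos, hpos.ne', h1.symm, by rw [h2, h1]; ring, by rw [h3, h1, h2]; ring, ?_⟩
  rw [eq_div_iff hpos.ne']
  exact gamma₂_mul_eq_of_structure_relation β₀ β₁ β₂ γ₁ γ₂ r₀ r₁ r₂ s₁ s₂ h1 h2 h3 h4 h5 h6

/-- Algebraic inversion of the system relating `(r_0, r_1, s_1, s_2)` to the recurrence
coefficients `(β_0, β_1, β_2, γ_1, γ_2)`, together with the positivity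
`2s_1 + r_0r_1 = γ_1 + s_1 + r_0² > 0`. -/
theorem stmt11 (β₀ β₁ β₂ γ₁ γ₂ r₀ r₁ r₂ s₁ s₂ : ℝ)
    (hγ₁ : 0 < γ₁) (hγ₂ : 0 < γ₂) (hs₁ : 0 < s₁)
    (h1 : r₀ = β₀)
    (h2 : r₁ = (β₀ + β₁) / 2)
    (h3 : s₁ = γ₁ + β₀ * (β₀ - β₁) / 2)
    (h4 : r₂ = (β₀ + β₁ + β₂) / 3)
    (h5 : s₂ = (β₀ ^ 2 + β₁ ^ 2 - (β₀ + β₁) * β₂ + 2 * (γ₁ + γ₂)) / 3)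
    (h6 : β₀ * (s₂ - γ₂) = (β₀ * β₁ - γ₁) * (r₂ - β₂)) :
    2 * s₁ + r₀ * r₁ = γ₁ + s₁ + r₀ ^ 2 ∧
    0 < 2 * s₁ + r₀ * r₁ ∧
    2 * s₁ + r₀ * r₁ ≠ 0 ∧
    β₀ = r₀ ∧
    β₁ = 2 * r₁ - r₀ ∧
    γ₁ = s₁ - r₀ * (r₀ - r₁) ∧
    γ₂ = (s₁ * (3 * s₂ - 2 * s₁) +
        2 * r₁ * (s₁ * (2 * r₀ - r₁) - r₀ * r₁ * (r₀ - r₁))) / (2 * s₁ + r₀ * r₁) :=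
  stmt11_general β₀ β₁ β₂ γ₁ γ₂ r₀ r₁ r₂ s₁ s₂ hγ₁ hs₁ h1 h2 h3 h4 h5 h6
end
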